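/- arXiv:1608.05245 — 2 statements merged into one kernel-verified Lean document; each statement's English description precedes it below -/
import Mathlib

section
/- Let Q_sat(θ, z) = A₀·exp(r·(θ − βz − θ_PBL)) with A₀, r, β, L > 0. Along the moist adiabat with parameter θᴹ, the derivative ∂Θ_ad/∂z equals β·(1 + 1/(r·L·Q_sat(θ, z)))⁻¹, and in particular 0 < ∂Θ_ad/∂z < β. -/
/-- Derivative of `Θ_ad` with respect to height for the exponential saturation model:
it equals `β (1 + 1/(r L Q_sat))⁻¹` and lies strictly between `0` and `β`. -/
theorem explicit_Thad_deriv
    (A₀ r β L θPBL : ℝ) (hA₀ : 0 < A₀) (hr : 0 < r) (hβ : 0 < β) (hL : 0 < L)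
    (Qsat : ℝ → ℝ → ℝ)
    (hQ : ∀ θ z, Qsat θ z = A₀ * Real.exp (r * (θ - β * z - θPBL)))
    (θM : ℝ) (Θad Θad' : ℝ → ℝ)
    (hlevel : ∀ z, Θad z + L * Qsat (Θad z) z = θM)
    (hTd : ∀ z, HasDerivAt Θad (Θad' z) z)
    (z : ℝ) :
    Θad' z = β * (1 + 1 / (r * L * Qsat (Θad z) z))⁻¹ ∧
      0 < Θad' z ∧ Θad' z < β := by
  have hqpos : 0 < Qsat (Θad z) z := by rw [hQ]; positivity
  set q := Qsat (Θad z) z with hq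
  -- derivative of the inner linear map
  have hinner : HasDerivAt (fun w => r * (Θad w - β * w - θPBL))
      (r * (Θad' z - β * 1)) z :=
    (((hTd z).sub ((hasDerivAt_id z).const_mul β)).sub_const θPBL).const_mul r
  have hexp : HasDerivAt (fun w => Real.exp (r * (Θad w - β * w - θPBL)))
      (Real.exp (r * (Θad z - β * z - θPBL)) * (r * (Θad' z - β * 1))) z := hinner.exp
  have hD : HasDerivAt (fun w => Θad w + L * (A₀ * Real.exp (r * (Θad w - β * w - θPBL))))
      (Θad' z + L * (A₀ * (Real.exp (r * (Θad z - β * z - θPBL)) * (r * (Θad' z - β * 1))))) z :=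
    (hTd z).add ((hexp.const_mul A₀).const_mul L)
  have hconst : (fun w => Θad w + L * (A₀ * Real.exp (r * (Θad w - β * w - θPBL))))
      = fun _ => θM := by
    funext w
    have := hlevel w
    rw [hQ] at this
    linarith
  rw [hconst] at hD
  have hzero : Θad' z + L * (A₀ * (Real.exp (r * (Θad z - β * z - θPBL)) * (r * (Θad' z - β * 1)))) = 0 :=
    hD.unique (hasDerivAt_const z θM)
  have hqe : A₀ * Real.exp (r * (Θad z - β * z - θPBL)) = q := (hQ _ _).symm
  have hzero' : Θad' z + L * (q * (r * (Θad' z - β))) = 0 := by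
    rw [← hqe]; ring_nf; ring_nf at hzero; linarith
  have hrLq : 0 < r * L * q := by positivity
  have hval : Θad' z = β * (1 + 1 / (r * L * q))⁻¹ := by
    have h1 : (0:ℝ) < 1 + r * L * q := by linarith
    rw [show (1 + 1 / (r * L * q))⁻¹ = (r * L * q) / (1 + r * L * q) by
      field_simp; ring]
    field_simp
    nlinarith [hzero']
  refine ⟨hval, ?_, ?_⟩
  · rw [hval]
    have : (0:ℝ) < (1 + 1 / (r * L * q))⁻¹ := by positivity
    positivity
  · rw [hval]
    have h1 : (1:ℝ) < 1 + 1 / (r * L * q) := by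
      have : 0 < 1 / (r * L * q) := by positivity
      linarith
    have h2 : (1 + 1 / (r * L * q))⁻¹ < 1 := by
      rw [inv_lt_one_iff₀]; right; exact h1
    nlinarith
end

section
/- Assume Q_sat is continuous, strictly increasing in θ with L > 0, and Θ_ad(z, θᴹ) exists for all relevant arguments. With θ_fi = Θ_disp(θ_in, q_in, z_fi) = max{θ_in, Θ_ad(z_fi, θ_in + L·q_in)} and q_fi = (θ_in + L·q_in − θ_fi)/L, we have q_fi ≤ Q_sat(θ_fi, z_fi) always; moreover if θ_fi = Θ_ad(z_fi, θ_in + L·q_in) ≥ θ_in then q_fi = Q_sat(θ_fi, z_fi). -/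
/-- A displaced parcel never exceeds saturation, and a parcel displaced along the
moist adiabat is exactly saturated. -/
theorem Theta_disp_saturation
    (Qsat : ℝ → ℝ → ℝ) (hQc : Continuous fun p : ℝ × ℝ => Qsat p.1 p.2)
    (hmono : ∀ z, StrictMono fun θ => Qsat θ z)
    (L : ℝ) (hL : 0 < L)
    (Θad : ℝ → ℝ → ℝ)
    (hΘad : ∀ z θM, Θad z θM + L * Qsat (Θad z θM) z = θM)
    (θin qin zfi : ℝ)
    (θfi : ℝ) (hθfi : θfi = max θin (Θad zfi (θin + L * qin)))
    (qfi : ℝ) (hqfi : qfi = (θin + L * qin - θfi) / L) :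
    qfi ≤ Qsat θfi zfi ∧
      (θin ≤ Θad zfi (θin + L * qin) → qfi = Qsat θfi zfi) := by
  set A := Θad zfi (θin + L * qin) with hA
  have hkey := hΘad zfi (θin + L * qin)
  rw [← hA] at hkey
  have heq : ∀ h : θin ≤ A, qfi = Qsat θfi zfi := by
    intro h
    have hmax : θfi = A := by rw [hθfi, max_eq_right h]
    rw [hqfi, hmax]
    field_simp
    linarith
  constructor
  · rcases le_total θin A with h | h
    · exact (heq h).le
    · have hmax : θfi = θin := by rw [hθfi, max_eq_left h]
      have hQle : Qsat A zfi ≤ Qsat θin zfi := (hmono zfi).monotone h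
      have : qfi = (A + L * Qsat A zfi - θin) / L := by rw [hqfi, hmax, ← hkey]
      rw [this, hmax]
      rw [div_le_iff₀ hL]
      nlinarith
  · exact heq
end
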